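/- If δ is a limit ordinal with δ < β < λ, then there exists α_0 < δ such that for all α with α_0 ≤ α < δ and all ℓ < k(β,δ), we have γ_ℓ(β,δ) = γ_ℓ(β,α); in particular the walk ρ(β,δ) is an initial segment of the walk ρ(β,α). -/

import Mathlib

/-!
Every walk from `β` descends (`walkStep e α γ ≤ γ`), so the walk from `β` to `δ` stays strictly
above `δ` before it arrives. At a step `γ_ℓ → γ_{ℓ+1}` with `γ_{ℓ+1} > δ` we have `δ ∉ e γ_ℓ`,
so by closedness of `e γ_ℓ` the ordinal `sup (e γ_ℓ ∩ δ)` is `< δ`. For `α` above it, `e γ_ℓ` has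
no points in `[α, δ)`, so the walk towards `α` takes the same step at `γ_ℓ` as the walk towards `δ`.
Taking `α₀` to be the largest of these finitely many bounds (plus one) gives the theorem.
-/

noncomputable def walkStep (e : Ordinal → Set Ordinal) (α β : Ordinal) : Ordinal :=
  sInf {γ | γ ∈ e β ∧ α ≤ γ}

noncomputable def walk (e : Ordinal → Set Ordinal) (α β : Ordinal) : ℕ → Ordinal
  | 0 => β
  | n + 1 => walkStep e α (walk e α β n)

/-- `k(β,α)`: the length of the walk, i.e. the first `k` with `γ_k(β,α) = α`. -/
noncomputable def kLen (e : Ordinal → Set Ordinal) (α β : Ordinal) : ℕ :=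
  sInf {k : ℕ | walk e α β k = α}

open Order Set

universe u

theorem sSup_inter_Iio_lt_of_notMem {α : Type*} [ConditionallyCompleteLinearOrderBot α]
    {s : Set α} {δ : α} (hδ : δ ≠ ⊥)
    (hclosed : (s ∩ Iio δ).Nonempty → sSup (s ∩ Iio δ) = δ → δ ∈ s) (hδs : δ ∉ s) :
    sSup (s ∩ Iio δ) < δ := by
  refine (csSup_le' fun x hx => hx.2.le).lt_of_ne fun hsup => ?_
  rcases (s ∩ Iio δ).eq_empty_or_nonempty with hempty | hne
  · exact hδ (by rw [← hsup, hempty, csSup_empty])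
  · exact hδs (hclosed hne hsup)

section Walk

variable {e : Ordinal.{u} → Set Ordinal.{u}} {α β γ δ : Ordinal.{u}}

theorem walkStep_self_of_mem (h : δ ∈ e γ) : walkStep e δ γ = δ :=
  le_antisymm (csInf_le' ⟨h, le_rfl⟩) (le_csInf ⟨δ, h, le_rfl⟩ fun _ hx => hx.2)

theorem walkStep_le (h : e γ ⊆ Iio γ) : walkStep e α γ ≤ γ := by
  rcases {x | x ∈ e γ ∧ α ≤ x}.eq_empty_or_nonempty with hempty | hne
  · rw [walkStep, hempty, Ordinal.sInf_empty]
    exact bot_le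
  · exact (h (csInf_mem hne).1).le

theorem walkStep_eq_of_succ_sSup_le (hαδ : α ≤ δ) (h : succ (sSup (e γ ∩ Iio δ)) ≤ α) :
    walkStep e α γ = walkStep e δ γ := by
  unfold walkStep
  congr 1
  ext x
  refine and_congr_right fun hx => ⟨fun hαx => ?_, hαδ.trans⟩
  by_contra! hxδ
  have hx_le : x ≤ sSup (e γ ∩ Iio δ) := le_csSup ⟨δ, fun _ hy => hy.2.le⟩ ⟨hx, hxδ⟩
  exact (lt_succ_iff.mpr hx_le).not_ge (h.trans hαx)

theorem walk_le_self {lam : Ordinal} (he : ∀ γ < lam, e γ ⊆ Iio γ) (hβ : β < lam) :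
    ∀ n, walk e α β n ≤ β
  | 0 => le_rfl
  | n + 1 =>
    have ih := walk_le_self he hβ n
    (walkStep_le (he _ (ih.trans_lt hβ))).trans ih

theorem walk_antitone {lam : Ordinal} (he : ∀ γ < lam, e γ ⊆ Iio γ) (hβ : β < lam) :
    Antitone (walk e α β) :=
  antitone_nat_of_succ_le fun n => walkStep_le (he _ ((walk_le_self he hβ n).trans_lt hβ))

theorem walk_kLen (h : 0 < kLen e α β) : walk e α β (kLen e α β) = α :=
  Nat.sInf_mem (Nat.nonempty_of_pos_sInf h)

theorem walk_ne_of_lt_kLen {n : ℕ} (hn : n < kLen e α β) : walk e α β n ≠ α :=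
  Nat.notMem_of_lt_sInf hn

theorem lt_walk_of_lt_kLen {lam : Ordinal} (he : ∀ γ < lam, e γ ⊆ Iio γ) (hβ : β < lam)
    {n : ℕ} (hn : n < kLen e α β) : α < walk e α β n := by
  have hk : walk e α β (kLen e α β) ≤ walk e α β n := walk_antitone he hβ hn.le
  rw [walk_kLen (n.zero_le.trans_lt hn)] at hk
  exact hk.lt_of_ne (walk_ne_of_lt_kLen hn).symm

theorem notMem_of_succ_lt_kLen {n : ℕ} (hn : n + 1 < kLen e α β) : α ∉ e (walk e α β n) :=
  fun h => walk_ne_of_lt_kLen hn (walkStep_self_of_mem h)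

theorem walk_eq_of_walkStep_eq {k : ℕ}
    (h : ∀ n, n + 1 < k → walkStep e α (walk e δ β n) = walkStep e δ (walk e δ β n)) :
    ∀ n < k, walk e α β n = walk e δ β n
  | 0, _ => rfl
  | n + 1, hn => by
    change walkStep e α (walk e α β n) = walkStep e δ (walk e δ β n)
    rw [walk_eq_of_walkStep_eq h n (by omega), h n hn]

end Walk

section CSequence

variable {lam : Ordinal.{u}} {e : Ordinal.{u} → Set Ordinal.{u}}

theorem cSeq_subset_Iio (he0 : e 0 = ∅) (heS : ∀ γ, e (γ + 1) = {γ})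
    (heL : ∀ β' < lam, IsSuccLimit β' → e β' ⊆ Iio β') : ∀ γ < lam, e γ ⊆ Iio γ := by
  intro γ hγ
  rcases Ordinal.zero_or_succ_or_isSuccLimit γ with rfl | ⟨γ', rfl⟩ | hlim
  · simp [he0]
  · rw [succ_eq_add_one, heS]
    exact singleton_subset_iff.2 (lt_add_one γ')
  · exact heL γ hγ hlim

theorem mem_cSeq_of_sSup_inter_Iio_eq {γ δ : Ordinal.{u}} (heS : ∀ γ, e (γ + 1) = {γ})
    (heL : ∀ β' < lam, IsSuccLimit β' →
      ∀ x < β', (e β' ∩ Iio x).Nonempty → sSup (e β' ∩ Iio x) = x → x ∈ e β')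
    (hγ : γ < lam) (hδγ : δ < γ) :
    (e γ ∩ Iio δ).Nonempty → sSup (e γ ∩ Iio δ) = δ → δ ∈ e γ := by
  rcases Ordinal.zero_or_succ_or_isSuccLimit γ with rfl | ⟨γ', rfl⟩ | hlim
  · exact absurd hδγ not_lt_bot
  · rintro ⟨x, hx, hxδ⟩
    rw [succ_eq_add_one, heS] at hx
    subst hx
    exact absurd (lt_succ_iff.mp hδγ) hxδ.not_ge
  · exact heL γ hγ hlim δ hδγ

end CSequence

theorem stmt2_general (lam β δ : Ordinal) (e : Ordinal → Set Ordinal)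
    (hbl : β < lam) (hδlim : Order.IsSuccLimit δ)
    (he0 : e 0 = ∅)
    (heS : ∀ γ, e (γ + 1) = {γ})
    (heL : ∀ β' < lam, Order.IsSuccLimit β' →
      e β' ⊆ Set.Iio β' ∧ (∀ x < β', ∃ y ∈ e β', x ≤ y) ∧
      ∀ x < β', (e β' ∩ Set.Iio x).Nonempty → sSup (e β' ∩ Set.Iio x) = x → x ∈ e β') :
    ∃ α₀ < δ, ∀ α, α₀ ≤ α → α < δ →
      ∀ l, l < kLen e δ β → walk e α β l = walk e δ β l := by
  have hsub := cSeq_subset_Iio he0 heS fun β' hβ' hlim => (heL β' hβ' hlim).1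
  set k := kLen e δ β
  set bound : ℕ → Ordinal := fun n => succ (sSup (e (walk e δ β n) ∩ Iio δ))
  have hbound : ∀ n, n + 1 < k → bound n < δ := fun n hn =>
    have hδn := lt_walk_of_lt_kLen hsub hbl (n.lt_succ_self.trans hn)
    hδlim.succ_lt <| sSup_inter_Iio_lt_of_notMem hδlim.ne_bot
      (mem_cSeq_of_sSup_inter_Iio_eq heS (fun β' hβ' hlim => (heL β' hβ' hlim).2.2)
        ((walk_le_self hsub hbl n).trans_lt hbl) hδn)
      (notMem_of_succ_lt_kLen hn)
  refine ⟨(Finset.range (k - 1)).sup bound, ?_, fun α hα₀ hαδ => ?_⟩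
  · exact (Finset.sup_lt_iff hδlim.bot_lt).2 fun n hn =>
      hbound n (by rw [Finset.mem_range] at hn; omega)
  · exact walk_eq_of_walkStep_eq fun n hn => walkStep_eq_of_succ_sSup_le hαδ.le <|
      (Finset.le_sup (f := bound) (Finset.mem_range.2 (by omega))).trans hα₀

/-- if `δ` is a limit ordinal with `δ < β < λ` then there is `α₀ < δ`
such that for all `α ∈ [α₀, δ)` and all `ℓ < k(β,δ)` we have
`γ_ℓ(β,δ) = γ_ℓ(β,α)`; in particular the walk `ρ(β,δ)` is an initial segment of
the walk `ρ(β,α)`. -/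
theorem stmt2 (lam β δ : Ordinal) (e : Ordinal → Set Ordinal)
    (hbl : β < lam) (hδβ : δ < β) (hδlim : Order.IsSuccLimit δ)
    (he0 : e 0 = ∅)
    (heS : ∀ γ, e (γ + 1) = {γ})
    (heL : ∀ β' < lam, Order.IsSuccLimit β' →
      e β' ⊆ Set.Iio β' ∧ (∀ x < β', ∃ y ∈ e β', x ≤ y) ∧
      ∀ x < β', (e β' ∩ Set.Iio x).Nonempty → sSup (e β' ∩ Set.Iio x) = x → x ∈ e β') :
    ∃ α₀ < δ, ∀ α, α₀ ≤ α → α < δ →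
      ∀ l, l < kLen e δ β → walk e α β l = walk e δ β l :=
  stmt2_general lam β δ e hbl hδlim he0 heS heL
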